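/- arXiv:2409.17997 — 2 statements merged into one kernel-verified Lean document; each statement's English description precedes it below -/
import Mathlib

section
/- Let P₁ and P₂ be n×n real symmetric positive definite matrices, let ω ∈ [0,1], and set P_Γ = ω·P₁ + (1 − ω)·P₂. Then the pairwise inverse-covariance-intersection information matrix satisfies (P₁)⁻¹ + (P₂)⁻¹ − (P_Γ)⁻¹ ⪰ (1 − ω)·(P₁)⁻¹ + ω·(P₂)⁻¹; in particular, (P₁)⁻¹ + (P₂)⁻¹ − (P_Γ)⁻¹ is symmetric positive definite, so the pairwise ICI fused covariance ((P₁)⁻¹ + (P₂)⁻¹ − (P_Γ)⁻¹)⁻¹ is well defined and positive definite. -/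
/-- Loewner order on real matrices: `M ⪯ N` iff `N - M` is positive semidefinite. -/
def Matrix.Loewner {n : ℕ} (M N : Matrix (Fin n) (Fin n) ℝ) : Prop :=
  (N - M).PosSemidef

/-!
Write `A = P₁⁻¹`, `B = P₂⁻¹`, `C = (1 - ω) A + ω B` and `D = A - B`. Expanding both sides gives
`P_Γ D = (P₂ - P₁) C`, and from this one checks
`(ω P₁ + (1 - ω) P₂)⁻¹ = ω A + (1 - ω) B - ω (1 - ω) D C⁻¹ D`, so the ICI information matrix is
`A + B - P_Γ⁻¹ = C + ω (1 - ω) D C⁻¹ D`. Here `C` is positive definite as a convex combination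
of positive definite matrices, and `D C⁻¹ D` is a congruence of `C⁻¹` by the symmetric `D`,
hence positive semidefinite.
-/

namespace Matrix

variable {m : Type*}

section InverseIdentity

variable {𝕜 : Type*} [Field 𝕜] [Fintype m] [DecidableEq m] {P₁ P₂ : Matrix m m 𝕜}

theorem smul_add_smul_mul_inv_sub_inv (hP₁ : IsUnit P₁) (hP₂ : IsUnit P₂) (ω : 𝕜) :
    (ω • P₁ + (1 - ω) • P₂) * (P₁⁻¹ - P₂⁻¹) = (P₂ - P₁) * ((1 - ω) • P₁⁻¹ + ω • P₂⁻¹) := by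
  have e₁ : P₁ * P₁⁻¹ = 1 := mul_nonsing_inv _ ((isUnit_iff_isUnit_det _).mp hP₁)
  have e₂ : P₂ * P₂⁻¹ = 1 := mul_nonsing_inv _ ((isUnit_iff_isUnit_det _).mp hP₂)
  simp only [Matrix.add_mul, Matrix.sub_mul, Matrix.mul_sub, Matrix.mul_add,
    Matrix.smul_mul, Matrix.mul_smul, e₁, e₂]
  module

theorem inv_smul_add_smul (hP₁ : IsUnit P₁) (hP₂ : IsUnit P₂) {ω : 𝕜}
    (hC : IsUnit ((1 - ω) • P₁⁻¹ + ω • P₂⁻¹)) :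
    (ω • P₁ + (1 - ω) • P₂)⁻¹ = ω • P₁⁻¹ + (1 - ω) • P₂⁻¹ -
      (ω * (1 - ω)) • ((P₁⁻¹ - P₂⁻¹) * ((1 - ω) • P₁⁻¹ + ω • P₂⁻¹)⁻¹ * (P₁⁻¹ - P₂⁻¹)) := by
  set C := (1 - ω) • P₁⁻¹ + ω • P₂⁻¹
  set D := P₁⁻¹ - P₂⁻¹
  set PΓ := ω • P₁ + (1 - ω) • P₂
  have e₁ : P₁ * P₁⁻¹ = 1 := mul_nonsing_inv _ ((isUnit_iff_isUnit_det _).mp hP₁)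
  have e₂ : P₂ * P₂⁻¹ = 1 := mul_nonsing_inv _ ((isUnit_iff_isUnit_det _).mp hP₂)
  have hPD : PΓ * (D * C⁻¹ * D) = (P₂ - P₁) * D := by
    rw [← Matrix.mul_assoc, ← Matrix.mul_assoc, smul_add_smul_mul_inv_sub_inv hP₁ hP₂,
      mul_nonsing_inv_cancel_right _ _ ((isUnit_iff_isUnit_det _).mp hC)]
  refine inv_eq_right_inv ?_
  rw [Matrix.mul_sub, Matrix.mul_smul, hPD]
  simp only [PΓ, D, Matrix.add_mul, Matrix.sub_mul, Matrix.mul_sub, Matrix.mul_add,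
    Matrix.smul_mul, Matrix.mul_smul, e₁, e₂]
  module

theorem inv_add_inv_sub_inv_smul_add_smul (hP₁ : IsUnit P₁) (hP₂ : IsUnit P₂) {ω : 𝕜}
    (hC : IsUnit ((1 - ω) • P₁⁻¹ + ω • P₂⁻¹)) :
    P₁⁻¹ + P₂⁻¹ - (ω • P₁ + (1 - ω) • P₂)⁻¹ = (1 - ω) • P₁⁻¹ + ω • P₂⁻¹ +
      (ω * (1 - ω)) • ((P₁⁻¹ - P₂⁻¹) * ((1 - ω) • P₁⁻¹ + ω • P₂⁻¹)⁻¹ * (P₁⁻¹ - P₂⁻¹)) := by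
  rw [inv_smul_add_smul hP₁ hP₂ hC]
  module

end InverseIdentity

theorem PosSemidef.mul_mul_self_of_isHermitian [Fintype m] {R : Type*} [CommRing R]
    [PartialOrder R] [StarRing R] {A B : Matrix m m R} (hA : A.PosSemidef) (hB : B.IsHermitian) :
    (B * A * B).PosSemidef := by
  simpa only [hB.eq] using hA.mul_mul_conjTranspose_same B

theorem PosDef.smul_add_smul {A B : Matrix m m ℝ} (hA : A.PosDef) (hB : B.PosDef) {a b : ℝ}
    (ha : 0 ≤ a) (hb : 0 ≤ b) (hab : 0 < a + b) : (a • A + b • B).PosDef := by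
  rcases ha.eq_or_lt with rfl | ha
  · exact PosDef.posSemidef_add (hA.posSemidef.smul le_rfl) (hB.smul (by linarith))
  · exact (hA.smul ha).add_posSemidef (hB.posSemidef.smul hb)

end Matrix

/-- **Pairwise ICI information bound.** For symmetric positive definite `P₁, P₂`,
`ω ∈ [0,1]` and `P_Γ = ω P₁ + (1−ω) P₂`, the ICI information matrix satisfies
`(P₁)⁻¹ + (P₂)⁻¹ − (P_Γ)⁻¹ ⪰ (1−ω)(P₁)⁻¹ + ω(P₂)⁻¹`; in particular it is symmetric
positive definite, so the fused covariance is well defined and positive definite. -/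
theorem pairwise_ici_posDef
    {n : ℕ} (P₁ P₂ : Matrix (Fin n) (Fin n) ℝ)
    (hP₁ : P₁.PosDef) (hP₂ : P₂.PosDef)
    (ω : ℝ) (hω0 : 0 ≤ ω) (hω1 : ω ≤ 1)
    (PΓ : Matrix (Fin n) (Fin n) ℝ) (hPΓ : PΓ = ω • P₁ + (1 - ω) • P₂) :
    Matrix.Loewner ((1 - ω) • P₁⁻¹ + ω • P₂⁻¹) (P₁⁻¹ + P₂⁻¹ - PΓ⁻¹) ∧
    (P₁⁻¹ + P₂⁻¹ - PΓ⁻¹).PosDef ∧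
    ((P₁⁻¹ + P₂⁻¹ - PΓ⁻¹)⁻¹).PosDef := by
  subst hPΓ
  set C := (1 - ω) • P₁⁻¹ + ω • P₂⁻¹
  have hC : C.PosDef := hP₁.inv.smul_add_smul hP₂.inv (by linarith) hω0 (by linarith)
  have hcorr : ((ω * (1 - ω)) • ((P₁⁻¹ - P₂⁻¹) * C⁻¹ * (P₁⁻¹ - P₂⁻¹))).PosSemidef :=
    (hC.inv.posSemidef.mul_mul_self_of_isHermitian
      (hP₁.inv.isHermitian.sub hP₂.inv.isHermitian)).smul (mul_nonneg hω0 (by linarith))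
  have hinfo := Matrix.inv_add_inv_sub_inv_smul_add_smul hP₁.isUnit hP₂.isUnit hC.isUnit
  have hpd : (P₁⁻¹ + P₂⁻¹ - (ω • P₁ + (1 - ω) • P₂)⁻¹).PosDef :=
    hinfo ▸ hC.add_posSemidef hcorr
  refine ⟨?_, hpd, hpd.inv⟩
  rw [Matrix.Loewner, hinfo, add_sub_cancel_left]
  exact hcorr
end

section
/- Let P₁ and P₂ be n×n real symmetric positive definite matrices with P₁ ⪯ γ̄·I and P₂ ⪯ γ̄·I for some γ̄ > 0, let ω ∈ [0,1], and set P_Γ = ω·P₁ + (1 − ω)·P₂. Then (P₁)⁻¹ + (P₂)⁻¹ − (P_Γ)⁻¹ ⪰ (1/γ̄)·I, and consequently the pairwise ICI fused covariance P̂ = ((P₁)⁻¹ + (P₂)⁻¹ − (P_Γ)⁻¹)⁻¹ satisfies P̂ ⪯ γ̄·I. (Theorem 1, diffusion-update bound, in the case of fusion of two local estimates.) -/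
/-!
Both claims reduce to two facts about the Loewner order on positive definite matrices: inversion
is antitone, and inversion is operator convex. Both follow from the Schur complement criterion:
for `A` positive definite, the block matrix `[A 1; 1 D]` is positive semidefinite iff `A⁻¹ ⪯ D`.
Convexity then writes `(P₁)⁻¹ + (P₂)⁻¹ − (P_Γ)⁻¹ ⪰ (1 − ω)(P₁)⁻¹ + ω(P₂)⁻¹`, and antitonicity bounds
each `(Pᵢ)⁻¹` below by `γ̄⁻¹·I`.
-/

open scoped MatrixOrder ComplexOrder

namespace Matrix

theorem inv_smul_one {m K : Type*} [Fintype m] [DecidableEq m] [Field K] (c : K) :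
    (c • (1 : Matrix m m K))⁻¹ = c⁻¹ • 1 := by
  rcases eq_or_ne c 0 with rfl | hc
  · simp
  · exact inv_eq_right_inv (by simp [smul_smul, hc])

variable {m 𝕜 : Type*} [RCLike 𝕜]

theorem PosDef.of_le {A B : Matrix m m 𝕜} (hA : A.PosDef) (hAB : A ≤ B) : B.PosDef := by
  simpa using hA.add_posSemidef hAB

theorem convex_setOf_posDef : Convex ℝ {A : Matrix m m 𝕜 | A.PosDef} := by
  intro A hA B hB a b ha hb hab
  rcases ha.eq_or_lt with rfl | ha
  · simp_all
  · exact (hA.smul ha).add_posSemidef (hB.posSemidef.smul hb)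

variable [Fintype m] [DecidableEq m]

theorem posSemidef_fromBlocks_one_one_iff₁₁ {A : Matrix m m 𝕜} (hA : A.PosDef)
    (D : Matrix m m 𝕜) : (fromBlocks A 1 1 D).PosSemidef ↔ A⁻¹ ≤ D := by
  have := hA.isUnit.invertible
  simpa [le_iff] using PosDef.fromBlocks₁₁ (1 : Matrix m m 𝕜) D hA

theorem posSemidef_fromBlocks_one_one_iff₂₂ (A : Matrix m m 𝕜) {D : Matrix m m 𝕜}
    (hD : D.PosDef) : (fromBlocks A 1 1 D).PosSemidef ↔ D⁻¹ ≤ A := by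
  have := hD.isUnit.invertible
  simpa [le_iff] using PosDef.fromBlocks₂₂ A (1 : Matrix m m 𝕜) hD

theorem PosDef.inv_anti {A B : Matrix m m 𝕜} (hA : A.PosDef) (hAB : A ≤ B) : B⁻¹ ≤ A⁻¹ := by
  have := hA.isUnit.invertible
  rwa [← posSemidef_fromBlocks_one_one_iff₁₁ (hA.of_le hAB),
    posSemidef_fromBlocks_one_one_iff₂₂ B hA.inv, inv_inv_of_invertible]

theorem convexOn_inv : ConvexOn ℝ {A : Matrix m m 𝕜 | A.PosDef} (·⁻¹) := by
  refine ⟨convex_setOf_posDef, fun A hA B hB a b ha hb hab => ?_⟩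
  have hblock {C : Matrix m m 𝕜} (hC : C.PosDef) : (fromBlocks C 1 1 C⁻¹).PosSemidef :=
    (posSemidef_fromBlocks_one_one_iff₁₁ hC _).2 le_rfl
  have hsum := ((hblock hA).smul ha).add ((hblock hB).smul hb)
  rw [fromBlocks_smul, fromBlocks_smul, fromBlocks_add, ← add_smul, hab, one_smul] at hsum
  exact (posSemidef_fromBlocks_one_one_iff₁₁ (convex_setOf_posDef hA hB ha hb hab) _).1 hsum

end Matrix

/-- **Theorem 1, pairwise diffusion-update bound.** If `P₁ ⪯ γ̄·I` and `P₂ ⪯ γ̄·I` are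
symmetric positive definite and `P_Γ = ω P₁ + (1−ω) P₂` with `ω ∈ [0,1]`, then
`(P₁)⁻¹ + (P₂)⁻¹ − (P_Γ)⁻¹ ⪰ (1/γ̄)·I`, and the pairwise ICI fused covariance
`P̂ = ((P₁)⁻¹ + (P₂)⁻¹ − (P_Γ)⁻¹)⁻¹` satisfies `P̂ ⪯ γ̄·I`. -/
theorem pairwise_ici_fused_bound
    {n : ℕ} (P₁ P₂ : Matrix (Fin n) (Fin n) ℝ)
    (hP₁ : P₁.PosDef) (hP₂ : P₂.PosDef)
    (γbar : ℝ) (hγ : 0 < γbar)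
    (hP₁up : Matrix.Loewner P₁ (γbar • (1 : Matrix (Fin n) (Fin n) ℝ)))
    (hP₂up : Matrix.Loewner P₂ (γbar • (1 : Matrix (Fin n) (Fin n) ℝ)))
    (ω : ℝ) (hω0 : 0 ≤ ω) (hω1 : ω ≤ 1)
    (PΓ : Matrix (Fin n) (Fin n) ℝ) (hPΓ : PΓ = ω • P₁ + (1 - ω) • P₂) :
    Matrix.Loewner ((1 / γbar) • (1 : Matrix (Fin n) (Fin n) ℝ)) (P₁⁻¹ + P₂⁻¹ - PΓ⁻¹) ∧
    Matrix.Loewner (P₁⁻¹ + P₂⁻¹ - PΓ⁻¹)⁻¹ (γbar • (1 : Matrix (Fin n) (Fin n) ℝ)) := by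
  have hP₁inv : γbar⁻¹ • 1 ≤ P₁⁻¹ := by rw [← Matrix.inv_smul_one]; exact hP₁.inv_anti hP₁up
  have hP₂inv : γbar⁻¹ • 1 ≤ P₂⁻¹ := by rw [← Matrix.inv_smul_one]; exact hP₂.inv_anti hP₂up
  have hconvex : PΓ⁻¹ ≤ ω • P₁⁻¹ + (1 - ω) • P₂⁻¹ :=
    hPΓ ▸ Matrix.convexOn_inv.2 hP₁ hP₂ hω0 (sub_nonneg.2 hω1) (add_sub_cancel ω 1)
  have hlower : (1 / γbar) • (1 : Matrix (Fin n) (Fin n) ℝ) ≤ P₁⁻¹ + P₂⁻¹ - PΓ⁻¹ :=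
    calc (1 / γbar) • (1 : Matrix (Fin n) (Fin n) ℝ)
        = (1 - ω) • (γbar⁻¹ • 1) + ω • (γbar⁻¹ • 1) := by module
      _ ≤ (1 - ω) • P₁⁻¹ + ω • P₂⁻¹ := add_le_add
          (smul_le_smul_of_nonneg_left hP₁inv (sub_nonneg.2 hω1))
          (smul_le_smul_of_nonneg_left hP₂inv hω0)
      _ = P₁⁻¹ + P₂⁻¹ - (ω • P₁⁻¹ + (1 - ω) • P₂⁻¹) := by module
      _ ≤ P₁⁻¹ + P₂⁻¹ - PΓ⁻¹ := sub_le_sub_left hconvex _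
  have hscalar : ((1 / γbar) • (1 : Matrix (Fin n) (Fin n) ℝ)).PosDef :=
    Matrix.PosDef.one.smul (by positivity)
  refine ⟨hlower, ?_⟩
  have hupper := hscalar.inv_anti hlower
  rwa [Matrix.inv_smul_one, one_div, inv_inv] at hupper
end
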